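/- For every real number q ≥ 0 and every integer n ≥ 1, W_{n+1}(q)·W_{n-1}(q) ≥ W_n(q)^2; that is, for each fixed q ≥ 0 the sequence {W_n(q)}_{n≥0} of real numbers is log-convex. -/

import Mathlib

open Finset

/-- `W n q = ∑_{k=0}^n C(n,k)^2 q^k` as a real number, for real `q`. -/
noncomputable def W (n : ℕ) (q : ℝ) : ℝ :=
  ∑ k ∈ Finset.range (n + 1), (Nat.choose n k : ℝ) ^ 2 * q ^ k

lemma sum_root_pow (M : ℕ) (x : ℂ) (hx : x ^ M = 1) :
    ∑ j ∈ Finset.range M, x ^ j = if x = 1 then (M : ℂ) else 0 := by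
  split_ifs with h
  · simp [h]
  · rw [geom_sum_eq h, hx]
    simp

lemma W_quad (q : ℝ) (hq : 0 ≤ q) (m M : ℕ) (hmM : m < M) :
    (M : ℝ) * W m q =
      ∑ j ∈ Finset.range M,
        ‖1 + (Real.sqrt q : ℂ) *
          Complex.exp (2 * Real.pi * Complex.I / M) ^ j‖ ^ (2 * m) := by
  have hM0 : M ≠ 0 := by omega
  set s : ℂ := (Real.sqrt q : ℂ) with hs
  set ω : ℂ := Complex.exp (2 * Real.pi * Complex.I / M) with hω
  have hprim : IsPrimitiveRoot ω M := Complex.isPrimitiveRoot_exp M hM0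
  have hωM : ω ^ M = 1 := hprim.pow_eq_one
  have habs : ‖ω‖ = 1 := by
    rw [hω]
    have : 2 * Real.pi * Complex.I / M = ((2 * Real.pi / M : ℝ) : ℂ) * Complex.I := by
      push_cast; ring
    rw [this, Complex.norm_exp_ofReal_mul_I]
  have hconjω : (starRingEnd ℂ) ω = ω⁻¹ := by
    refine eq_inv_of_mul_eq_one_right ?_
    rw [Complex.mul_conj, ← Complex.sq_norm, habs]
    norm_num
  have hconjs : (starRingEnd ℂ) s = s := Complex.conj_ofReal _
  have hω0 : ω ≠ 0 := by
    intro h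
    rw [h, zero_pow hM0] at hωM
    exact zero_ne_one hωM
  -- work in ℂ
  have key : ∀ j : ℕ, ((‖1 + s * ω ^ j‖ : ℝ) : ℂ) ^ (2 * m)
      = (1 + s * ω ^ j) ^ m * (1 + s * (ω⁻¹) ^ j) ^ m := by
    intro j
    have hz : (1 + s * ω ^ j) * (starRingEnd ℂ) (1 + s * ω ^ j)
        = (1 + s * ω ^ j) * (1 + s * (ω⁻¹) ^ j) := by
      rw [map_add, map_mul, map_pow, hconjω, hconjs, map_one]
    rw [pow_mul, ← Complex.ofReal_pow, Complex.sq_norm, ← Complex.mul_conj, hz]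
    exact mul_pow _ _ _
  apply Complex.ofReal_injective
  rw [W]
  push_cast
  calc (M : ℂ) * ∑ k ∈ Finset.range (m + 1), (Nat.choose m k : ℂ) ^ 2 * (q : ℂ) ^ k
      = ∑ j ∈ Finset.range M, (1 + s * ω ^ j) ^ m * (1 + s * (ω⁻¹) ^ j) ^ m := ?_
    _ = ∑ j ∈ Finset.range M, ((‖1 + s * ω ^ j‖ : ℝ) : ℂ) ^ (2 * m) := by
        refine Finset.sum_congr rfl fun j _ => (key j).symm
  -- main computation
  have expand : ∀ j : ℕ, (1 + s * ω ^ j) ^ m * (1 + s * (ω⁻¹) ^ j) ^ m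
      = ∑ k ∈ Finset.range (m + 1), ∑ l ∈ Finset.range (m + 1),
          (s ^ (k + l) * (Nat.choose m k : ℂ) * (Nat.choose m l : ℂ))
            * (ω ^ k * (ω⁻¹) ^ l) ^ j := by
    intro j
    rw [add_comm (1 : ℂ) (s * ω ^ j), add_comm (1 : ℂ) (s * (ω⁻¹) ^ j), add_pow, add_pow,
      Finset.sum_mul_sum]
    refine Finset.sum_congr rfl fun k _ => Finset.sum_congr rfl fun l _ => ?_
    ring
  rw [Finset.sum_congr rfl fun j _ => expand j, Finset.sum_comm]
  have inner : ∀ k ∈ Finset.range (m + 1),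
      ∑ j ∈ Finset.range M, ∑ l ∈ Finset.range (m + 1),
          (s ^ (k + l) * (Nat.choose m k : ℂ) * (Nat.choose m l : ℂ))
            * (ω ^ k * (ω⁻¹) ^ l) ^ j
      = (M : ℂ) * ((Nat.choose m k : ℂ) ^ 2 * (q : ℂ) ^ k) := by
    intro k hk
    rw [Finset.sum_comm]
    have each : ∀ l ∈ Finset.range (m + 1),
        ∑ j ∈ Finset.range M,
          (s ^ (k + l) * (Nat.choose m k : ℂ) * (Nat.choose m l : ℂ))
            * (ω ^ k * (ω⁻¹) ^ l) ^ j
        = if l = k then (s ^ (k + l) * (Nat.choose m k : ℂ) * (Nat.choose m l : ℂ)) * M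
          else 0 := by
      intro l hl
      rw [← Finset.mul_sum]
      have hx : (ω ^ k * (ω⁻¹) ^ l) ^ M = 1 := by
        rw [mul_pow, ← pow_mul, ← pow_mul, mul_comm k M, mul_comm l M, pow_mul, pow_mul,
          hωM, inv_pow, hωM]
        norm_num
      rw [sum_root_pow M _ hx]
      simp only [Finset.mem_range] at hk hl
      have hiff : (ω ^ k * (ω⁻¹) ^ l = 1) ↔ l = k := by
        have hrw : ω ^ k * (ω⁻¹) ^ l = ω ^ ((k : ℤ) - (l : ℤ)) := by
          rw [sub_eq_add_neg, zpow_add₀ hω0, zpow_natCast, zpow_neg,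
            ← inv_zpow, zpow_natCast]
        rw [hrw, hprim.zpow_eq_one_iff_dvd]
        constructor
        · intro hd
          have h0 : ((k : ℤ) - (l : ℤ)) = 0 :=
            Int.eq_zero_of_dvd_of_natAbs_lt_natAbs hd (by omega)
          omega
        · intro h
          rw [h]
          simp
      by_cases h : l = k
      · rw [if_pos (hiff.mpr h), if_pos h]
      · rw [if_neg (fun hh => h (hiff.mp hh)), if_neg h, mul_zero]
    rw [Finset.sum_congr rfl each, Finset.sum_ite_eq' (Finset.range (m + 1)) k]
    simp only [Finset.mem_range] at hk
    rw [if_pos (Finset.mem_range.mpr hk)]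
    have hs2 : s ^ (k + k) = (q : ℂ) ^ k := by
      rw [← two_mul, pow_mul, hs, ← Complex.ofReal_pow, Real.sq_sqrt hq]
    rw [hs2]
    ring
  rw [Finset.sum_congr rfl inner, ← Finset.mul_sum]

/-- For every fixed real `q ≥ 0`, the sequence `{W n q}_{n ≥ 0}` is log-convex. -/
theorem W_log_convex (q : ℝ) (hq : 0 ≤ q) (n : ℕ) (hn : 1 ≤ n) :
    W n q ^ 2 ≤ W (n + 1) q * W (n - 1) q := by
  set M : ℕ := 2 * n + 3 with hM
  set B : ℕ → ℝ := fun j => ‖1 + (Real.sqrt q : ℂ) *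
    Complex.exp (2 * Real.pi * Complex.I / M) ^ j‖ with hB
  have h1 : (M : ℝ) * W (n + 1) q = ∑ j ∈ Finset.range M, B j ^ (2 * (n + 1)) :=
    W_quad q hq (n + 1) M (by omega)
  have h2 : (M : ℝ) * W n q = ∑ j ∈ Finset.range M, B j ^ (2 * n) :=
    W_quad q hq n M (by omega)
  have h3 : (M : ℝ) * W (n - 1) q = ∑ j ∈ Finset.range M, B j ^ (2 * (n - 1)) :=
    W_quad q hq (n - 1) M (by omega)
  have cs := Finset.sum_mul_sq_le_sq_mul_sq (Finset.range M)
    (fun j => B j ^ (n + 1)) (fun j => B j ^ (n - 1))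
  have e1 : ∀ j : ℕ, B j ^ (n + 1) * B j ^ (n - 1) = B j ^ (2 * n) := by
    intro j
    rw [← pow_add]
    congr 1
    omega
  have e2 : ∀ j : ℕ, (B j ^ (n + 1)) ^ 2 = B j ^ (2 * (n + 1)) := by
    intro j
    rw [← pow_mul]
    congr 1
    omega
  have e3 : ∀ j : ℕ, (B j ^ (n - 1)) ^ 2 = B j ^ (2 * (n - 1)) := by
    intro j
    rw [← pow_mul]
    congr 1
    omega
  rw [Finset.sum_congr rfl fun j _ => e1 j, Finset.sum_congr rfl fun j _ => e2 j,
    Finset.sum_congr rfl fun j _ => e3 j, ← h1, ← h2, ← h3] at cs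
  have hMpos : (0 : ℝ) < (M : ℝ) := by positivity
  have key : (M : ℝ) ^ 2 * W n q ^ 2 ≤ (M : ℝ) ^ 2 * (W (n + 1) q * W (n - 1) q) := by
    nlinarith [cs]
  exact le_of_mul_le_mul_left key (by positivity)
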